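/- In the d-dimensional lattice graph, for d−1 ≤ t ≤ dn−1, the kernel of the DtN submatrix T^{(t)} = Λ_γ(∂D \ J_t^S; J_t^S) equals the kernel of T₁^{(t)}: a boundary potential φ supported on J_t^S produces zero current on ∂D \ J_t^S if and only if its γ-harmonic extension vanishes on the slice L_{t+1}. -/

import Mathlib

noncomputable section
open Classical Finset

namespace DiscreteCalderon

/-- Vertices of the ambient lattice `ℤ^d`. -/
abbrev V (d : ℕ) := Fin d → ℤ

/-- Interior vertex set `D = {x : 1 ≤ x_i ≤ n}`. -/
def Dset (d n : ℕ) : Set (V d) := {x | ∀ i, 1 ≤ x i ∧ x i ≤ (n : ℤ)}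

/-- ℓ¹ distance. -/
def dist1 {d : ℕ} (p q : V d) : ℤ := ∑ i, |p i - q i|

/-- Boundary vertex set `∂D`: vertices at ℓ¹ distance 1 from `D`. -/
def Bset (d n : ℕ) : Set (V d) := {p | p ∉ Dset d n ∧ ∃ q ∈ Dset d n, dist1 p q = 1}

/-- All vertices of the graph, `D ∪ ∂D`. -/
def Vset (d n : ℕ) : Set (V d) := Dset d n ∪ Bset d n

/-- Adjacency of the lattice graph: ℓ¹ distance 1, both endpoints vertices,
not both on the boundary. -/
def Adj (d n : ℕ) (p q : V d) : Prop :=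
  dist1 p q = 1 ∧ p ∈ Vset d n ∧ q ∈ Vset d n ∧ (p ∈ Dset d n ∨ q ∈ Dset d n)

/-- A finite box containing all vertices. -/
def box (d n : ℕ) : Finset (V d) :=
  Fintype.piFinset (fun _ : Fin d => Finset.Icc (0 : ℤ) ((n : ℤ) + 1))

/-- Neighbours of `p` in the graph, as a finite set. -/
def nbr (d n : ℕ) (p : V d) : Finset (V d) := (box d n).filter (fun q => Adj d n p q)

/-- Interior neighbours of `p`. -/
def nbrD (d n : ℕ) (p : V d) : Finset (V d) := (nbr d n p).filter (fun q => q ∈ Dset d n)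

/-- The discrete (weighted) Laplacian `(Δ_γ u)_p = ∑_{q∈N(p)} γ_{qp}(u_q - u_p)`. -/
def lap (d n : ℕ) (γ : V d → V d → ℝ) (u : V d → ℝ) (p : V d) : ℝ :=
  ∑ q ∈ nbr d n p, γ q p * (u q - u p)

/-- The boundary current `(D_γ u)_p = ∑_{q∈N(p)∩D} γ_{pq}(u_q - u_p)`
(there is exactly one interior neighbour of a boundary node). -/
def cur (d n : ℕ) (γ : V d → V d → ℝ) (u : V d → ℝ) (p : V d) : ℝ :=
  ∑ q ∈ nbrD d n p, γ p q * (u q - u p)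

/-- A strictly positive symmetric conductivity. -/
def GoodCond (d n : ℕ) (γ : V d → V d → ℝ) : Prop :=
  (∀ p q, γ p q = γ q p) ∧ ∀ p q, Adj d n p q → 0 < γ p q

/-- The coordinate sum of a lattice point. -/
def sum1 {d : ℕ} (x : V d) : ℤ := ∑ i, x i

/-- Interior diagonal slice `L_t`. -/
def L (d n : ℕ) (t : ℤ) : Set (V d) := {x | x ∈ Dset d n ∧ sum1 x = t}

/-- `L_t^S = ∪_{ℓ ≤ t} L_ℓ`. -/
def LS (d n : ℕ) (t : ℤ) : Set (V d) := {x | x ∈ Dset d n ∧ sum1 x ≤ t}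

/-- Boundary diagonal slice `K_t`. -/
def K (d n : ℕ) (t : ℤ) : Set (V d) := {x | x ∈ Bset d n ∧ sum1 x = t}

/-- `K_t^- = {x ∈ K_t : min_i x_i = 0}`. -/
def Km (d n : ℕ) (t : ℤ) : Set (V d) := {x | x ∈ K d n t ∧ ∃ i, x i = 0}

/-- `K_t^+ = {x ∈ K_t : max_i x_i = n+1}`. -/
def Kp (d n : ℕ) (t : ℤ) : Set (V d) := {x | x ∈ K d n t ∧ ∃ i, x i = (n : ℤ) + 1}

/-- `K_t^{S-} = ∪_{ℓ ≤ t} K_ℓ^-`. -/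
def KSm (d n : ℕ) (t : ℤ) : Set (V d) := {x | x ∈ Bset d n ∧ sum1 x ≤ t ∧ ∃ i, x i = 0}

/-- `K_t^{S+} = ∪_{ℓ ≤ t} K_ℓ^+`. -/
def KSp (d n : ℕ) (t : ℤ) : Set (V d) := {x | x ∈ Bset d n ∧ sum1 x ≤ t ∧ ∃ i, x i = (n : ℤ) + 1}

/-- The lower boundary region `J_t^S = K_t^{S-} ∪ K_{t+1}^{S+}`. -/
def JS (d n : ℕ) (t : ℤ) : Set (V d) := KSm d n t ∪ KSp d n (t + 1)

/-- `J_t = K_t^- ∪ K_{t+1}^+`. -/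
def Jslice (d n : ℕ) (t : ℤ) : Set (V d) := Km d n t ∪ Kp d n (t + 1)

/-- `u` is the γ-harmonic extension of boundary data `φ` (zero-extension convention
outside `D ∪ ∂D`). -/
def IsSol (d n : ℕ) (γ : V d → V d → ℝ) (φ u : V d → ℝ) : Prop :=
  (∀ p, p ∉ Vset d n → u p = 0) ∧
  (∀ p ∈ Dset d n, lap d n γ u p = 0) ∧
  (∀ p ∈ Bset d n, u p = φ p)

/-- The Laplacian row vector `v_p`. -/
def vrow (d n : ℕ) (γ : V d → V d → ℝ) (p : V d) : V d → ℝ := fun q =>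
  if Adj d n p q then γ p q
  else if q = p then -(∑ r ∈ nbr d n p, γ p r) else 0

/-- Restriction of a function to a set (zero outside). -/
def rst {d : ℕ} (S : Set (V d)) (f : V d → ℝ) : V d → ℝ := fun q => if q ∈ S then f q else 0

/-- Euclidean inner product of (vertex-supported) functions. -/
def dot (d n : ℕ) (f g : V d → ℝ) : ℝ := ∑ p ∈ box d n, f p * g p

/-- The localized solution space `𝒰^{(t)}`: restrictions to `L_t^S ∪ J_t^S` of
harmonic extensions of boundary potentials in `ker T₁^{(t)}`. -/
def Uset (d n : ℕ) (γ : V d → V d → ℝ) (t : ℤ) : Set (V d → ℝ) :=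
  {u | (∀ p, p ∉ LS d n t ∪ JS d n t → u p = 0) ∧
    ∃ φ w : V d → ℝ, (∀ p, p ∉ JS d n t → φ p = 0) ∧ IsSol d n γ φ w ∧
      (∀ p ∈ L d n (t + 1), w p = 0) ∧ ∀ p ∈ LS d n t ∪ JS d n t, u p = w p}

/-- The set `E_t` of edges between the consecutive layers:
`E(K_t^-, L_{t+1}) ∪ E(L_t, K_{t+1}^+) ∪ E(L_t, L_{t+1})`. -/
def EdgeT (d n : ℕ) (t : ℤ) (p q : V d) : Prop :=
  Adj d n p q ∧
    ((p ∈ Km d n t ∧ q ∈ L d n (t + 1)) ∨ (q ∈ Km d n t ∧ p ∈ L d n (t + 1)) ∨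
     (p ∈ L d n t ∧ q ∈ Kp d n (t + 1)) ∨ (q ∈ L d n t ∧ p ∈ Kp d n (t + 1)) ∨
     (p ∈ L d n t ∧ q ∈ L d n (t + 1)) ∨ (q ∈ L d n t ∧ p ∈ L d n (t + 1)))

/-- The edge vector `J_p^u ∈ ℝ^{E_t}`, `J_p^u(pq) = u_p - u_q` on edges of `E_t`
incident to `p`, and `0` otherwise (as a symmetric function of edge endpoints). -/
def Jvec (d n : ℕ) (t : ℤ) (u : V d → ℝ) (p : V d) : V d → V d → ℝ := fun a b =>
  if EdgeT d n t a b then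
    (if a = p then u a - u b else if b = p then u b - u a else 0)
  else 0

/-- Inner product of edge functions. -/
def dotE (d n : ℕ) (f g : V d → V d → ℝ) : ℝ :=
  ∑ p ∈ box d n, ∑ q ∈ box d n, f p q * g p q


/-!
Both sides say that `u` vanishes on the interior part `D \ L_t^S` of the upper subgraph.
Outside `J_t^S` the potential vanishes, so zero current at a boundary node forces `u` to vanish
at its interior neighbour (Cauchy data). Ordering interior nodes `q` of the upper subgraph by
`sum1 q + q i`, harmonicity at `q + e_i` then propagates the vanishing from the face `q i = n`
downwards. Conversely, if `u` vanishes on `L_{t+1}`, then its restriction to `D \ L_{t+1}^S` is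
harmonic with zero boundary values and vanishes by the maximum principle; the current at a boundary
node outside `J_t^S` only sees nodes where `u = 0`.
-/

lemma forall_mem_of_bounded_induction {α : Type*} {S : Set α} {P : α → Prop} (f : α → ℤ)
    (B : ℤ) (hB : ∀ x ∈ S, f x ≤ B) (ih : ∀ x ∈ S, (∀ y ∈ S, f x < f y → P y) → P x) :
    ∀ x ∈ S, P x := by
  suffices ∀ k : ℕ, ∀ x ∈ S, B - f x ≤ k → P x from
    fun x hx => this _ x hx (Int.self_le_toNat _)
  intro k
  induction k with
  | zero => exact fun x hx hxk => ih x hx fun y hy hxy => absurd (hB y hy) (by omega)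
  | succ k hk => exact fun x hx hxk => ih x hx fun y hy hxy => hk y hy (by omega)

section Geometry

variable {d n : ℕ}

lemma dist1_comm (p q : V d) : dist1 p q = dist1 q p := by
  simp only [dist1, abs_sub_comm]

lemma dist1_eq_one_iff {p q : V d} :
    dist1 p q = 1 ↔ ∃ i, (q i = p i + 1 ∨ q i = p i - 1) ∧ ∀ j ≠ i, q j = p j := by
  constructor
  · intro h
    obtain ⟨i, hi⟩ : ∃ i, p i - q i ≠ 0 := by
      by_contra! hc
      simp [dist1, hc] at h
    have hsplit := add_sum_erase univ (fun j => |p j - q j|) (mem_univ i)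
    rw [← dist1, h] at hsplit
    have hrest : ∑ j ∈ univ.erase i, |p j - q j| = 0 := by
      have := Int.one_le_abs hi
      have := sum_nonneg fun j (_ : j ∈ univ.erase i) => abs_nonneg (p j - q j)
      omega
    refine ⟨i, ?_, fun j hj => ?_⟩
    · rcases (abs_eq zero_le_one).1 (show |p i - q i| = 1 by omega) with h | h <;> omega
    · have := (sum_eq_zero_iff_of_nonneg fun j _ => abs_nonneg (p j - q j)).1 hrest j
        (mem_erase.2 ⟨hj, mem_univ j⟩)
      rw [abs_eq_zero] at this
      omega
  · rintro ⟨i, hi, hrest⟩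
    rw [dist1, sum_eq_single_of_mem i (mem_univ i) fun j _ hj => by
      rw [hrest j hj, sub_self, abs_zero]]
    rcases hi with h | h <;> rw [h] <;> norm_num

lemma sum1_eq_of_forall_ne {p q : V d} {i : Fin d} (h : ∀ j ≠ i, q j = p j) :
    sum1 q = sum1 p + (q i - p i) := by
  have : ∑ j, (q j - p j) = q i - p i :=
    sum_eq_single_of_mem i (mem_univ i) fun j _ hj => by rw [h j hj, sub_self]
  rw [sum_sub_distrib] at this
  rw [sum1, sum1]
  omega

lemma sum1_update (p : V d) (i : Fin d) (c : ℤ) :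
    sum1 (Function.update p i c) = sum1 p + (c - p i) := by
  simpa using sum1_eq_of_forall_ne (q := Function.update p i c) fun j hj =>
    Function.update_of_ne hj c p

lemma dist1_update {p : V d} {i : Fin d} {c : ℤ} (h : c = p i + 1 ∨ c = p i - 1) :
    dist1 p (Function.update p i c) = 1 :=
  dist1_eq_one_iff.2 ⟨i, by simpa using h, fun j hj => Function.update_of_ne hj c p⟩

lemma sum1_of_dist1 {p q : V d} (h : dist1 p q = 1) :
    sum1 q = sum1 p + 1 ∨ sum1 q = sum1 p - 1 := by
  obtain ⟨i, hi, hrest⟩ := dist1_eq_one_iff.1 h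
  have := sum1_eq_of_forall_ne hrest
  omega

lemma sum1_le_of_mem_Dset {p : V d} (hp : p ∈ Dset d n) : sum1 p ≤ d * n :=
  calc sum1 p ≤ ∑ _i : Fin d, (n : ℤ) := sum_le_sum fun i _ => (hp i).2
    _ = d * n := by simp

lemma mem_Dset_diff_LS {t : ℤ} {p : V d} :
    p ∈ Dset d n \ LS d n t ↔ p ∈ Dset d n ∧ t < sum1 p := by
  simp [LS]

lemma exists_boundary_coord {p q : V d} (hp : p ∉ Dset d n) (hq : q ∈ Dset d n)
    (h : dist1 p q = 1) :
    ∃ i, (p i = 0 ∧ q i = 1 ∨ p i = n + 1 ∧ q i = n) ∧ ∀ j ≠ i, q j = p j := by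
  obtain ⟨i, hi, hrest⟩ := dist1_eq_one_iff.1 h
  refine ⟨i, ?_, hrest⟩
  obtain ⟨k, hk⟩ : ∃ k, ¬(1 ≤ p k ∧ p k ≤ n) := by
    by_contra! hc
    exact hp hc
  obtain rfl : k = i := by
    by_contra hki
    exact hk (hrest k hki ▸ hq k)
  have := hq k
  omega

lemma eq_of_dist1_of_notMem_Dset {p q r : V d} (hp : p ∉ Dset d n) (hq : q ∈ Dset d n)
    (hr : r ∈ Dset d n) (hpq : dist1 p q = 1) (hpr : dist1 p r = 1) : q = r := by
  obtain ⟨i, hi, hqi⟩ := exists_boundary_coord hp hq hpq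
  obtain ⟨j, hj, hrj⟩ := exists_boundary_coord hp hr hpr
  obtain rfl : j = i := by
    by_contra hji
    have := hq j
    rw [hqi j hji] at this
    omega
  funext k
  by_cases hk : k = j
  · subst hk
    omega
  · rw [hqi k hk, hrj k hk]

lemma mem_box_of_mem_Vset {p : V d} (hp : p ∈ Vset d n) : p ∈ box d n := by
  simp only [box, Fintype.mem_piFinset, mem_Icc]
  intro k
  rcases hp with hp | ⟨hpD, q, hq, hpq⟩
  · have := hp k
    omega
  · obtain ⟨i, hi, hrest⟩ := exists_boundary_coord hpD hq hpq
    have := hq k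
    by_cases hk : k = i
    · subst hk
      omega
    · rw [hrest k hk] at this
      omega

lemma Adj.symm {p q : V d} (h : Adj d n p q) : Adj d n q p := by
  obtain ⟨hpq, hp, hq, hD⟩ := h
  exact ⟨by rwa [dist1_comm], hq, hp, hD.symm⟩

lemma adj_of_mem_Dset {p q : V d} (hp : p ∈ Dset d n) (h : dist1 p q = 1) : Adj d n p q := by
  refine ⟨h, Or.inl hp, ?_, Or.inl hp⟩
  by_cases hq : q ∈ Dset d n
  · exact Or.inl hq
  · exact Or.inr ⟨hq, p, hp, by rwa [dist1_comm]⟩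

lemma mem_nbr {p q : V d} : q ∈ nbr d n p ↔ Adj d n p q := by
  rw [nbr, mem_filter]
  exact ⟨And.right, fun h => ⟨mem_box_of_mem_Vset h.2.2.1, h⟩⟩

lemma nbrD_eq_singleton {p q : V d} (hp : p ∉ Dset d n) (hq : q ∈ Dset d n)
    (h : dist1 p q = 1) : nbrD d n p = {q} := by
  ext r
  simp only [nbrD, mem_filter, mem_singleton, mem_nbr]
  constructor
  · rintro ⟨hpr, hr⟩
    exact (eq_of_dist1_of_notMem_Dset hp hq hr h hpr.1).symm
  · rintro rfl
    exact ⟨(adj_of_mem_Dset hq (by rwa [dist1_comm])).symm, hq⟩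

lemma notMem_JS_of_dist1 {t : ℤ} {p r : V d} (hp : p ∈ Dset d n) (hpr : dist1 p r = 1)
    (hsp : t < sum1 p) (hsr : t < sum1 r) : r ∉ JS d n t := by
  rintro (⟨-, hr, -⟩ | ⟨-, hr, k, hk⟩)
  · omega
  · obtain ⟨i, hi, hrest⟩ := dist1_eq_one_iff.1 hpr
    have := sum1_eq_of_forall_ne hrest
    have := (hp k).2
    by_cases hki : k = i
    · subst hki
      omega
    · rw [hrest k hki] at hk
      omega

lemma lt_sum1_of_notMem_JS {t : ℤ} {p q : V d} (hp : p ∈ Bset d n) (hpJ : p ∉ JS d n t)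
    (hq : q ∈ Dset d n) (h : dist1 p q = 1) : t < sum1 q := by
  obtain ⟨i, hi, hrest⟩ := exists_boundary_coord hp.1 hq h
  have := sum1_eq_of_forall_ne hrest
  by_contra! hle
  rcases hi with ⟨hp0, hq1⟩ | ⟨hpn, hqn⟩
  · exact hpJ (Or.inl ⟨hp, by omega, i, hp0⟩)
  · exact hpJ (Or.inr ⟨hp, by omega, i, hpn⟩)

lemma sum1_lt_of_dist1_update_succ {q r : V d} {i : Fin d}
    (h : dist1 (Function.update q i (q i + 1)) r = 1) (hrq : r ≠ q) :
    sum1 q ≤ sum1 r ∧ sum1 q + q i < sum1 r + r i := by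
  obtain ⟨j, hj, hrest⟩ := dist1_eq_one_iff.1 h
  have hsp := sum1_update q i (q i + 1)
  have hsr := sum1_eq_of_forall_ne hrest
  by_cases hji : j = i
  · subst hji
    rw [Function.update_self] at hj hsr
    rcases hj with hj | hj
    · omega
    · refine absurd (funext fun k => ?_) hrq
      by_cases hk : k = j
      · subst hk
        omega
      · rw [hrest k hk, Function.update_of_ne hk]
  · have : r i = q i + 1 := by rw [hrest i (Ne.symm hji), Function.update_self]
    omega

end Geometry

section Laplacian

variable {d n : ℕ} {γ : V d → V d → ℝ}

lemma pos_of_mem_nbr (hγ : ∀ p q, Adj d n p q → 0 < γ p q) {p q : V d} (hq : q ∈ nbr d n p) :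
    0 < γ q p :=
  hγ q p (mem_nbr.1 hq).symm

lemma cur_eq {u : V d → ℝ} {p q : V d} (hp : p ∉ Dset d n) (hq : q ∈ Dset d n)
    (h : dist1 p q = 1) : cur d n γ u p = γ p q * (u q - u p) := by
  rw [cur, nbrD_eq_singleton hp hq h, sum_singleton]

lemma eq_of_lap_eq_zero_of_forall_ne {w : V d → ℝ} {p q : V d} (hγ : γ q p ≠ 0)
    (hq : q ∈ nbr d n p) (hlap : lap d n γ w p = 0) (h : ∀ r ∈ nbr d n p, r ≠ q → w r = w p) :
    w q = w p := by
  rw [lap, sum_eq_single_of_mem q hq fun r hr hrq => by rw [h r hr hrq, sub_self, mul_zero]]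
    at hlap
  exact sub_eq_zero.1 ((mul_eq_zero.1 hlap).resolve_left hγ)

lemma eq_of_lap_eq_zero_of_le {w : V d → ℝ} {p : V d} (hγ : ∀ q ∈ nbr d n p, 0 < γ q p)
    (hlap : lap d n γ w p = 0) (hle : ∀ q ∈ nbr d n p, w q ≤ w p) :
    ∀ q ∈ nbr d n p, w q = w p := by
  have hnonpos : ∀ q ∈ nbr d n p, γ q p * (w q - w p) ≤ 0 := fun q hq =>
    mul_nonpos_of_nonneg_of_nonpos (hγ q hq).le (sub_nonpos.2 (hle q hq))
  intro q hq
  have := (sum_eq_zero_iff_of_nonpos hnonpos).1 hlap q hq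
  exact sub_eq_zero.1 ((mul_eq_zero.1 this).resolve_left (hγ q hq).ne')

lemma lap_neg (w : V d → ℝ) (p : V d) : lap d n γ (-w) p = -lap d n γ w p := by
  simp only [lap, Pi.neg_apply, ← sum_neg_distrib]
  exact sum_congr rfl fun q _ => by ring

lemma lap_indicator {S : Set (V d)} {w : V d → ℝ} {p : V d} (hp : p ∈ S)
    (h : ∀ r ∈ nbr d n p, r ∉ S → w r = 0) : lap d n γ (S.indicator w) p = lap d n γ w p := by
  refine sum_congr rfl fun r hr => ?_
  rw [Set.indicator_of_mem hp]
  by_cases hrS : r ∈ S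
  · rw [Set.indicator_of_mem hrS]
  · rw [Set.indicator_of_notMem hrS, h r hr hrS]

lemma eq_zero_of_cur_eq_zero (hγ : ∀ p q, Adj d n p q → 0 < γ p q) {u : V d → ℝ} {p q : V d}
    (hp : p ∉ Dset d n) (hq : q ∈ Dset d n) (h : dist1 p q = 1) (hcur : cur d n γ u p = 0)
    (hup : u p = 0) : u q = 0 := by
  rw [cur_eq hp hq h, hup, sub_zero] at hcur
  exact (mul_eq_zero.1 hcur).resolve_left
    (hγ p q (adj_of_mem_Dset hq (by rwa [dist1_comm])).symm).ne'

-- A maximiser of least coordinate sum would have a maximising neighbour `q - e_0` of smaller sum.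
theorem le_zero_of_lap_eq_zero (hd : 0 < d) (hγ : ∀ p q, Adj d n p q → 0 < γ p q)
    {S : Set (V d)} (hS : S ⊆ Dset d n) {w : V d → ℝ} (hw : ∀ p ∉ S, w p = 0)
    (hlap : ∀ p ∈ S, lap d n γ w p = 0) (p : V d) : w p ≤ 0 := by
  by_contra! hpos
  have mem_S : ∀ q, 0 < w q → q ∈ S := fun q hq => by
    by_contra h
    rw [hw q h] at hq
    exact hq.false
  have hp_box : p ∈ box d n := mem_box_of_mem_Vset (Or.inl (hS (mem_S p hpos)))
  obtain ⟨m, hm_box, hm⟩ := (box d n).exists_max_image w ⟨p, hp_box⟩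
  obtain ⟨q, hq, hmin⟩ :=
    ((box d n).filter (w · = w m)).exists_min_image sum1 ⟨m, mem_filter.2 ⟨hm_box, rfl⟩⟩
  rw [mem_filter] at hq
  have hqS : q ∈ S := mem_S q (by linarith [hm p hp_box])
  set i : Fin d := ⟨0, hd⟩
  set r := Function.update q i (q i - 1)
  have hr : r ∈ nbr d n q := mem_nbr.2 (adj_of_mem_Dset (hS hqS) (dist1_update (Or.inr rfl)))
  have hwr : w r = w q := eq_of_lap_eq_zero_of_le (fun _ h => pos_of_mem_nbr hγ h) (hlap q hqS)
    (fun x hx => hq.2 ▸ hm x (mem_filter.1 hx).1) r hr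
  have := hmin r (mem_filter.2 ⟨(mem_filter.1 hr).1, hwr.trans hq.2⟩)
  rw [sum1_update] at this
  omega

theorem eq_zero_of_lap_eq_zero (hd : 0 < d) (hγ : ∀ p q, Adj d n p q → 0 < γ p q)
    {S : Set (V d)} (hS : S ⊆ Dset d n) {w : V d → ℝ} (hw : ∀ p ∉ S, w p = 0)
    (hlap : ∀ p ∈ S, lap d n γ w p = 0) (p : V d) : w p = 0 := by
  have h₁ := le_zero_of_lap_eq_zero hd hγ hS hw hlap p
  have h₂ := le_zero_of_lap_eq_zero hd hγ hS (w := -w) (fun q hq => by simp [hw q hq])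
    (fun q hq => by rw [lap_neg, hlap q hq, neg_zero]) p
  rw [Pi.neg_apply, neg_nonpos] at h₂
  exact le_antisymm h₁ h₂

end Laplacian

section Upper

variable {d n : ℕ} {γ : V d → V d → ℝ} {t : ℤ} {φ u : V d → ℝ}

theorem eq_zero_of_eq_zero_on_higher (hγ : ∀ p q, Adj d n p q → 0 < γ p q)
    (hφ : ∀ p, p ∉ JS d n t → φ p = 0) (hu : IsSol d n γ φ u) {q : V d} {i : Fin d}
    (hq : q ∈ Dset d n \ LS d n t) (hlt : q i < n)
    (ih : ∀ r ∈ Dset d n \ LS d n t, sum1 q + q i < sum1 r + r i → u r = 0) : u q = 0 := by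
  obtain ⟨hqD, hqt⟩ := mem_Dset_diff_LS.1 hq
  set p := Function.update q i (q i + 1) with hp
  have hpi : p i = q i + 1 := by rw [hp, Function.update_self]
  have hpD : p ∈ Dset d n := fun j => by
    by_cases hj : j = i
    · rw [hj, hpi]
      have := hqD i
      omega
    · rw [hp, Function.update_of_ne hj]
      exact hqD j
  have hsp : sum1 p = sum1 q + 1 := by rw [hp, sum1_update]; ring
  have hpq : dist1 p q = 1 := by
    rw [dist1_comm]
    exact dist1_update (Or.inl rfl)
  have hup : u p = 0 := ih p (mem_Dset_diff_LS.2 ⟨hpD, by omega⟩) (by omega)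
  have hq_nbr : q ∈ nbr d n p := mem_nbr.2 (adj_of_mem_Dset hpD hpq)
  refine (eq_of_lap_eq_zero_of_forall_ne (pos_of_mem_nbr hγ hq_nbr).ne' hq_nbr (hu.2.1 p hpD)
    fun r hr hrq => ?_).trans hup
  have hpr := (mem_nbr.1 hr).1
  obtain ⟨hsr, hμr⟩ := sum1_lt_of_dist1_update_succ hpr hrq
  rw [hup]
  rcases (mem_nbr.1 hr).2.2.1 with hrD | hrB
  · exact ih r (mem_Dset_diff_LS.2 ⟨hrD, by omega⟩) hμr
  · rw [hu.2.2 r hrB]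
    exact hφ r (notMem_JS_of_dist1 hpD hpr (by omega) (by omega))

theorem eq_zero_of_coord_eq_of_cur_eq_zero (hγ : ∀ p q, Adj d n p q → 0 < γ p q)
    (hφ : ∀ p, p ∉ JS d n t → φ p = 0) (hu : IsSol d n γ φ u)
    (hcur : ∀ p ∈ Bset d n \ JS d n t, cur d n γ u p = 0) {q : V d} {i : Fin d}
    (hq : q ∈ Dset d n \ LS d n t) (heq : q i = n) : u q = 0 := by
  obtain ⟨hqD, hqt⟩ := mem_Dset_diff_LS.1 hq
  set p := Function.update q i (n + 1)
  have hpD : p ∉ Dset d n := fun h => by simpa [p] using (h i).2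
  have hqp : dist1 q p = 1 := dist1_update (Or.inl (by rw [heq]))
  have hpq : dist1 p q = 1 := by rwa [dist1_comm]
  have hpB : p ∈ Bset d n := ⟨hpD, q, hqD, hpq⟩
  have hpJ : p ∉ JS d n t := notMem_JS_of_dist1 hqD hqp hqt (by rw [sum1_update]; omega)
  exact eq_zero_of_cur_eq_zero hγ hpD hqD hpq (hcur p ⟨hpB, hpJ⟩) ((hu.2.2 p hpB).trans (hφ p hpJ))

theorem eq_zero_upper_of_cur_eq_zero (hd : 0 < d) (hγ : ∀ p q, Adj d n p q → 0 < γ p q)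
    (hφ : ∀ p, p ∉ JS d n t → φ p = 0) (hu : IsSol d n γ φ u)
    (hcur : ∀ p ∈ Bset d n \ JS d n t, cur d n γ u p = 0) :
    ∀ q ∈ Dset d n \ LS d n t, u q = 0 := by
  set i : Fin d := ⟨0, hd⟩
  refine forall_mem_of_bounded_induction (fun q => sum1 q + q i) (d * n + n)
    (fun q hq => by linarith [sum1_le_of_mem_Dset hq.1, (hq.1 i).2]) fun q hq ih => ?_
  rcases (hq.1 i).2.lt_or_eq with hlt | heq
  · exact eq_zero_of_eq_zero_on_higher hγ hφ hu hq hlt ih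
  · exact eq_zero_of_coord_eq_of_cur_eq_zero hγ hφ hu hcur hq heq

theorem eq_zero_upper_of_eq_zero_slice (hd : 0 < d) (hγ : ∀ p q, Adj d n p q → 0 < γ p q)
    (hφ : ∀ p, p ∉ JS d n t → φ p = 0) (hu : IsSol d n γ φ u)
    (hL : ∀ p ∈ L d n (t + 1), u p = 0) :
    ∀ q ∈ Dset d n \ LS d n t, u q = 0 := by
  obtain ⟨-, hharm, hbd⟩ := hu
  set S := Dset d n \ LS d n (t + 1)
  have hS : ∀ p ∈ S, ∀ r ∈ nbr d n p, r ∉ S → u r = 0 := by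
    intro p hp r hr hrS
    rw [mem_Dset_diff_LS] at hp hrS
    have hpr := (mem_nbr.1 hr).1
    have hsr := sum1_of_dist1 hpr
    rcases (mem_nbr.1 hr).2.2.1 with hrD | hrB
    · have : ¬t + 1 < sum1 r := fun h => hrS ⟨hrD, h⟩
      exact hL r ⟨hrD, by omega⟩
    · rw [hbd r hrB]
      exact hφ r (notMem_JS_of_dist1 hp.1 hpr (by omega) (by omega))
  have hzero := eq_zero_of_lap_eq_zero hd hγ Set.sdiff_subset (w := S.indicator u)
    (fun p hp => Set.indicator_of_notMem hp u)
    fun p hp => (lap_indicator hp (hS p hp)).trans (hharm p hp.1)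
  intro q hq
  obtain ⟨hqD, hqt⟩ := mem_Dset_diff_LS.1 hq
  rcases (show sum1 q = t + 1 ∨ t + 1 < sum1 q by omega) with h | h
  · exact hL q ⟨hqD, h⟩
  · rw [← Set.indicator_of_mem (mem_Dset_diff_LS.2 ⟨hqD, h⟩) u]
    exact hzero q

end Upper

theorem stmt11_general (d n : ℕ) (hd : 2 ≤ d)
    (γ : V d → V d → ℝ) (hγ : GoodCond d n γ)
    (t : ℤ)
    (φ u : V d → ℝ)
    (hφ : ∀ p, p ∉ JS d n t → φ p = 0)
    (hu : IsSol d n γ φ u) :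
    (∀ p ∈ Bset d n \ JS d n t, cur d n γ u p = 0) ↔
      (∀ p ∈ L d n (t + 1), u p = 0) := by
  have hd₀ : 0 < d := by omega
  constructor
  · intro hcur p ⟨hpD, hpt⟩
    exact eq_zero_upper_of_cur_eq_zero hd₀ hγ.2 hφ hu hcur p
      (mem_Dset_diff_LS.2 ⟨hpD, by omega⟩)
  · rintro hL p ⟨hpB, hpJ⟩
    obtain ⟨q, hq, hpq⟩ := hpB.2
    have huq := eq_zero_upper_of_eq_zero_slice hd₀ hγ.2 hφ hu hL q
      (mem_Dset_diff_LS.2 ⟨hq, lt_sum1_of_notMem_JS hpB hpJ hq hpq⟩)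
    rw [cur_eq hpB.1 hq hpq, huq, (hu.2.2 p hpB).trans (hφ p hpJ), sub_zero, mul_zero]

/-- `ker T^{(t)} = ker T₁^{(t)}`: a boundary potential supported on
`J_t^S` produces zero current on `∂D \ J_t^S` iff its harmonic extension vanishes
on the slice `L_{t+1}`. -/
theorem stmt11 (d n : ℕ) (hd : 2 ≤ d) (hn : 1 ≤ n)
    (γ : V d → V d → ℝ) (hγ : GoodCond d n γ)
    (t : ℤ) (ht1 : (d : ℤ) - 1 ≤ t) (ht2 : t ≤ (d : ℤ) * n - 1)
    (φ u : V d → ℝ)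
    (hφ : ∀ p, p ∉ JS d n t → φ p = 0)
    (hu : IsSol d n γ φ u) :
    (∀ p ∈ Bset d n \ JS d n t, cur d n γ u p = 0) ↔
      (∀ p ∈ L d n (t + 1), u p = 0) :=
  stmt11_general d n hd γ hγ t φ u hφ hu

end DiscreteCalderon
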